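/- arXiv:2205.08323 — 2 statements merged into one kernel-verified Lean document; each statement's English description precedes it below -/
import Mathlib

section
/- For the pp-wave metric g = x²dt² + 2dtdz + dx² + dy² on ℝ⁴, the vector fields k₁ = ∂_t, k₂ = e^{-t}(∂_x + x∂_z), k₃ = ∂_y, k₄ = ∂_z are Killing fields, and the Lie algebra they span (with minus the vector field bracket) is solvable with the only nonzero bracket [k₁,k₂] = k₂ (up to sign conventions: the flow bracket gives [∂_t, e^{-t}(∂_x+x∂_z)] = -e^{-t}(∂_x+x∂_z)). -/
open Matrix

/-- Vector fields on ℝ⁴. -/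
abbrev VF := (Fin 4 → ℝ) → Fin 4 → ℝ

/-- Partial derivative in the i-th coordinate direction on ℝ⁴. -/
noncomputable def pd (i : Fin 4) (f : (Fin 4 → ℝ) → ℝ) (x : Fin 4 → ℝ) : ℝ :=
  fderiv ℝ f x (Pi.single i 1)

/-- The pp-wave metric g = x²dt² + 2dtdz + dx² + dy² in coordinates (t,x,y,z). -/
noncomputable def ppw (p : Fin 4 → ℝ) : Matrix (Fin 4) (Fin 4) ℝ :=
  !![(p 1) ^ 2, 0, 0, 1;
     0, 1, 0, 0;
     0, 0, 1, 0;
     1, 0, 0, 0]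

/-- Coordinate Lie derivative of a metric along a vector field. -/
noncomputable def lieD (g : (Fin 4 → ℝ) → Matrix (Fin 4) (Fin 4) ℝ)
    (X : VF) (p : Fin 4 → ℝ) (i j : Fin 4) : ℝ :=
  (∑ k, X p k * pd k (fun y => g y i j) p)
  + (∑ k, g p k j * pd i (fun y => X y k) p)
  + (∑ k, g p i k * pd j (fun y => X y k) p)

/-- Usual Lie bracket of vector fields. -/
noncomputable def vb (X Y : VF) : VF := fun p i =>
  ∑ k, (X p k * pd k (fun y => Y y i) p - Y p k * pd k (fun y => X y i) p)

/-- Minus the Lie bracket (the bracket of the symmetry algebra). -/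
noncomputable def mbr (X Y : VF) : VF := fun p i => -(vb X Y p i)

noncomputable def k₁ : VF := fun _ => ![1, 0, 0, 0]
noncomputable def k₂ : VF := fun p => ![0, Real.exp (-p 0), 0, p 1 * Real.exp (-p 0)]
noncomputable def k₃ : VF := fun _ => ![0, 0, 1, 0]
noncomputable def k₄ : VF := fun _ => ![0, 0, 0, 1]

/-!
The span of `k₁, …, k₄` consists of the explicit fields
`a ∂_t + b e^{-t} (∂_x + x ∂_z) + c ∂_y + d ∂_z`. A direct coordinate computation shows that each
of them is Killing and that the bracket of two of them is `(a b' - b a') k₂`. Hence the derived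
algebra is the line `ℝ k₂`, which is abelian.
-/

open Real

theorem pd_eq_of_hasFDerivAt {f : (Fin 4 → ℝ) → ℝ} {L : (Fin 4 → ℝ) →L[ℝ] ℝ} {p : Fin 4 → ℝ}
    (h : HasFDerivAt f L p) (i : Fin 4) : pd i f p = L (Pi.single i 1) := by
  rw [pd, h.fderiv]

theorem pd_const (i : Fin 4) (c : ℝ) (p : Fin 4 → ℝ) : pd i (fun _ => c) p = 0 := by
  simp [pd]

theorem hasFDerivAt_coord (j : Fin 4) (p : Fin 4 → ℝ) :
    HasFDerivAt (fun y : Fin 4 → ℝ => y j)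
      (ContinuousLinearMap.proj (R := ℝ) (φ := fun _ : Fin 4 => ℝ) j) p :=
  hasFDerivAt_apply j p

theorem pd_coord_sq (i : Fin 4) (p : Fin 4 → ℝ) :
    pd i (fun y => y 1 ^ 2) p = if i = 1 then 2 * p 1 else 0 := by
  rw [pd_eq_of_hasFDerivAt ((hasFDerivAt_coord 1 p).pow 2) i]
  fin_cases i <;> simp

theorem hasFDerivAt_exp_neg_coord (p : Fin 4 → ℝ) :
    HasFDerivAt (fun y : Fin 4 → ℝ => exp (-y 0))
      (exp (-p 0) • -ContinuousLinearMap.proj (R := ℝ) (φ := fun _ : Fin 4 => ℝ) 0) p :=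
  (hasFDerivAt_coord 0 p).fun_neg.exp

theorem pd_const_mul_exp_neg (b : ℝ) (i : Fin 4) (p : Fin 4 → ℝ) :
    pd i (fun y => b * exp (-y 0)) p = if i = 0 then -(b * exp (-p 0)) else 0 := by
  rw [pd_eq_of_hasFDerivAt ((hasFDerivAt_exp_neg_coord p).const_mul b) i]
  fin_cases i <;> simp

theorem pd_const_mul_coord_mul_exp_neg_add (b d : ℝ) (i : Fin 4) (p : Fin 4 → ℝ) :
    pd i (fun y => b * (y 1 * exp (-y 0)) + d) p =
      (if i = 0 then -(b * (p 1 * exp (-p 0))) else 0) +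
        (if i = 1 then b * exp (-p 0) else 0) := by
  rw [pd_eq_of_hasFDerivAt
    ((((hasFDerivAt_coord 1 p).fun_mul (hasFDerivAt_exp_neg_coord p)).const_mul b).add_const d) i]
  fin_cases i <;> simp

noncomputable def killingField (a b c d : ℝ) : VF :=
  fun p => ![a, b * exp (-p 0), c, b * (p 1 * exp (-p 0)) + d]

theorem killingField_eq (a b c d : ℝ) :
    killingField a b c d = a • k₁ + b • k₂ + c • k₃ + d • k₄ := by
  ext p i
  fin_cases i <;> simp [killingField, k₁, k₂, k₃, k₄]

theorem k₁_eq_killingField : k₁ = killingField 1 0 0 0 := by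
  simp [killingField_eq]

theorem k₂_eq_killingField : k₂ = killingField 0 1 0 0 := by
  simp [killingField_eq]

theorem k₃_eq_killingField : k₃ = killingField 0 0 1 0 := by
  simp [killingField_eq]

theorem k₄_eq_killingField : k₄ = killingField 0 0 0 1 := by
  simp [killingField_eq]

theorem killingField_zero : killingField 0 0 0 0 = 0 := by
  simp [killingField_eq]

theorem exists_eq_killingField_of_mem_span {X : VF}
    (hX : X ∈ Submodule.span ℝ ({k₁, k₂, k₃, k₄} : Set VF)) :
    ∃ a b c d, X = killingField a b c d := by
  simp only [Submodule.mem_span_insert, Submodule.mem_span_singleton] at hX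
  obtain ⟨a, _, ⟨b, _, ⟨c, _, ⟨d, rfl⟩, rfl⟩, rfl⟩, rfl⟩ := hX
  exact ⟨a, b, c, d, by rw [killingField_eq]; abel⟩

theorem lieD_ppw_killingField (a b c d : ℝ) (p : Fin 4 → ℝ) (i j : Fin 4) :
    lieD ppw (killingField a b c d) p i j = 0 := by
  fin_cases i <;> fin_cases j <;>
    simp [lieD, ppw, killingField, Fin.sum_univ_four, pd_const, pd_coord_sq,
      pd_const_mul_exp_neg, pd_const_mul_coord_mul_exp_neg_add]
  all_goals ring

theorem mbr_killingField (a b c d a' b' c' d' : ℝ) :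
    mbr (killingField a b c d) (killingField a' b' c' d') =
      killingField 0 (a * b' - b * a') 0 0 := by
  ext p i
  fin_cases i <;>
    simp [mbr, vb, killingField, Fin.sum_univ_four, pd_const, pd_const_mul_exp_neg,
      pd_const_mul_coord_mul_exp_neg_add] <;> ring

theorem mbr_mbr_eq_zero_of_mem_span {X Y Z W : VF}
    (hX : X ∈ Submodule.span ℝ ({k₁, k₂, k₃, k₄} : Set VF))
    (hY : Y ∈ Submodule.span ℝ ({k₁, k₂, k₃, k₄} : Set VF))
    (hZ : Z ∈ Submodule.span ℝ ({k₁, k₂, k₃, k₄} : Set VF))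
    (hW : W ∈ Submodule.span ℝ ({k₁, k₂, k₃, k₄} : Set VF)) :
    mbr (mbr X Y) (mbr Z W) = 0 := by
  obtain ⟨a₁, b₁, c₁, d₁, rfl⟩ := exists_eq_killingField_of_mem_span hX
  obtain ⟨a₂, b₂, c₂, d₂, rfl⟩ := exists_eq_killingField_of_mem_span hY
  obtain ⟨a₃, b₃, c₃, d₃, rfl⟩ := exists_eq_killingField_of_mem_span hZ
  obtain ⟨a₄, b₄, c₄, d₄, rfl⟩ := exists_eq_killingField_of_mem_span hW
  simp [mbr_killingField, killingField_zero]

/-- k₁,k₂,k₃,k₄ are Killing fields of the pp-wave metric, the only nonzero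
bracket among them (with minus the vector field bracket) is [k₁,k₂] = k₂, and
the Lie algebra they span is solvable (its derived algebra is abelian). -/
theorem ppwave_killing_solvable :
    (∀ p i j, lieD ppw k₁ p i j = 0) ∧
    (∀ p i j, lieD ppw k₂ p i j = 0) ∧
    (∀ p i j, lieD ppw k₃ p i j = 0) ∧
    (∀ p i j, lieD ppw k₄ p i j = 0) ∧
    (∀ p i, mbr k₁ k₂ p i = k₂ p i) ∧
    (∀ p i, vb k₁ k₂ p i = -k₂ p i) ∧
    (∀ p i, mbr k₁ k₃ p i = 0) ∧ (∀ p i, mbr k₁ k₄ p i = 0) ∧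
    (∀ p i, mbr k₂ k₃ p i = 0) ∧ (∀ p i, mbr k₂ k₄ p i = 0) ∧
    (∀ p i, mbr k₃ k₄ p i = 0) ∧
    (∀ X Y Z W : VF, X ∈ Submodule.span ℝ ({k₁, k₂, k₃, k₄} : Set VF) →
      Y ∈ Submodule.span ℝ ({k₁, k₂, k₃, k₄} : Set VF) →
      Z ∈ Submodule.span ℝ ({k₁, k₂, k₃, k₄} : Set VF) →
      W ∈ Submodule.span ℝ ({k₁, k₂, k₃, k₄} : Set VF) →
      ∀ p i, mbr (mbr X Y) (mbr Z W) p i = 0) := by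
  have h₁₂ : ∀ p i, mbr k₁ k₂ p i = k₂ p i := by
    simp [k₁_eq_killingField, k₂_eq_killingField, mbr_killingField]
  refine ⟨k₁_eq_killingField ▸ lieD_ppw_killingField 1 0 0 0,
    k₂_eq_killingField ▸ lieD_ppw_killingField 0 1 0 0,
    k₃_eq_killingField ▸ lieD_ppw_killingField 0 0 1 0,
    k₄_eq_killingField ▸ lieD_ppw_killingField 0 0 0 1,
    h₁₂, fun p i => neg_eq_iff_eq_neg.mp (h₁₂ p i), ?_, ?_, ?_, ?_, ?_,
    fun X Y Z W hX hY hZ hW p i => by rw [mbr_mbr_eq_zero_of_mem_span hX hY hZ hW]; rfl⟩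
  all_goals
    simp [k₁_eq_killingField, k₂_eq_killingField, k₃_eq_killingField, k₄_eq_killingField,
      mbr_killingField, killingField_zero]
end

section
/- On the 3-dimensional Heisenberg group realized as ℝ³ with coordinates (x₁,x₂,x₃) and metric g = dx₁² - dx₂² + (dx₃ - x₁dx₂)², for any arc-length parametrized geodesic-like curve γ(t) = (γ₁(t),γ₂(t),γ₃(t)) satisfying the conformal circle equations with u₁ = (1/√2)(γ₁'-γ₂'), u₂ = γ₃'-γ₁γ₂', u₃ = (1/√2)(γ₁'+γ₂'), a₁ = -u₁u₂+u₁', a₂ = u₂', a₃ = u₃u₂+u₃', the quantities E = 2a₁a₃ + a₂² + u₂² and J = -a₃u₁ + a₁u₃ - u₂/2 are constant along γ. -/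
/-!
In the null frame `(u₁, u₂, u₃)` the metric reads `g(x, y) = x₁y₃ + x₂y₂ + x₃y₁`, so the
constraints say that `u` is a unit vector and `a ⟂ u`. Along the conformal circle equations the
energy `E` and the charge `J` satisfy `dE/dt = 2 (u₂² - g(a, a)) g(u, a)` and
`dJ/dt = -½ u₂ g(u, a) + ½ a₂ (g(u, u) - 1)`, and both right-hand sides vanish under the
constraints.
-/

namespace Heisenberg

theorem deriv_energy_eq_zero {u₁ u₂ u₃ a₁ a₂ a₃ : ℝ → ℝ}
    (hu₂d : Differentiable ℝ u₂)
    (ha₁d : Differentiable ℝ a₁) (ha₂d : Differentiable ℝ a₂)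
    (ha₃d : Differentiable ℝ a₃)
    (ha₂ : ∀ t, a₂ t = deriv u₂ t)
    (hA₁ : ∀ t, deriv a₁ t =
      -(u₁ t) * (2 * a₁ t * a₃ t + (a₂ t) ^ 2) + u₁ t * (u₂ t) ^ 2
      + (1/2) * u₁ t * a₂ t + (1/2) * u₂ t * a₁ t)
    (hA₂ : ∀ t, deriv a₂ t =
      -(u₂ t) * (2 * a₁ t * a₃ t + (a₂ t) ^ 2) + (u₂ t) ^ 3 - u₂ t
      + (1/2) * u₃ t * a₁ t - (1/2) * u₁ t * a₃ t)
    (hA₃ : ∀ t, deriv a₃ t =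
      -(u₃ t) * (2 * a₁ t * a₃ t + (a₂ t) ^ 2) + u₃ t * (u₂ t) ^ 2
      - (1/2) * u₃ t * a₂ t - (1/2) * u₂ t * a₃ t)
    (horth : ∀ t, u₁ t * a₃ t + u₂ t * a₂ t + u₃ t * a₁ t = 0) (t : ℝ) :
    deriv (fun s => 2 * a₁ s * a₃ s + (a₂ s) ^ 2 + (u₂ s) ^ 2) t = 0 := by
  have hE : HasDerivAt (fun s => 2 * a₁ s * a₃ s + a₂ s ^ 2 + u₂ s ^ 2) _ t :=
    ((((ha₁d t).hasDerivAt.const_mul 2).mul (ha₃d t).hasDerivAt).add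
      ((ha₂d t).hasDerivAt.pow 2)).add ((hu₂d t).hasDerivAt.pow 2)
  rw [hE.deriv, hA₁ t, hA₂ t, hA₃ t, ← ha₂ t]
  linear_combination (2 * u₂ t ^ 2 - 2 * (2 * a₁ t * a₃ t + a₂ t ^ 2)) * horth t

theorem deriv_charge_eq_zero {u₁ u₂ u₃ a₁ a₂ a₃ : ℝ → ℝ}
    (hu₁d : Differentiable ℝ u₁) (hu₂d : Differentiable ℝ u₂)
    (hu₃d : Differentiable ℝ u₃)
    (ha₁d : Differentiable ℝ a₁) (ha₃d : Differentiable ℝ a₃)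
    (ha₁ : ∀ t, a₁ t = -(u₁ t * u₂ t) + deriv u₁ t)
    (ha₂ : ∀ t, a₂ t = deriv u₂ t)
    (ha₃ : ∀ t, a₃ t = u₃ t * u₂ t + deriv u₃ t)
    (hA₁ : ∀ t, deriv a₁ t =
      -(u₁ t) * (2 * a₁ t * a₃ t + (a₂ t) ^ 2) + u₁ t * (u₂ t) ^ 2
      + (1/2) * u₁ t * a₂ t + (1/2) * u₂ t * a₁ t)
    (hA₃ : ∀ t, deriv a₃ t =
      -(u₃ t) * (2 * a₁ t * a₃ t + (a₂ t) ^ 2) + u₃ t * (u₂ t) ^ 2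
      - (1/2) * u₃ t * a₂ t - (1/2) * u₂ t * a₃ t)
    (hunit : ∀ t, 2 * u₁ t * u₃ t + (u₂ t) ^ 2 = 1)
    (horth : ∀ t, u₁ t * a₃ t + u₂ t * a₂ t + u₃ t * a₁ t = 0) (t : ℝ) :
    deriv (fun s => -(a₃ s * u₁ s) + a₁ s * u₃ s - u₂ s / 2) t = 0 := by
  have hJ : HasDerivAt (fun s => -(a₃ s * u₁ s) + a₁ s * u₃ s - u₂ s / 2) _ t :=
    (((ha₃d t).hasDerivAt.mul (hu₁d t).hasDerivAt).neg.add
      ((ha₁d t).hasDerivAt.mul (hu₃d t).hasDerivAt)).sub ((hu₂d t).hasDerivAt.div_const 2)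
  rw [hJ.deriv, hA₁ t, hA₃ t]
  linear_combination (-(1/2) * u₂ t) * horth t + ((1/2) * a₂ t) * hunit t
    + a₃ t * ha₁ t - a₁ t * ha₃ t + (1/2) * ha₂ t

end Heisenberg

theorem heisenberg_conserved_quantities_general
    (u₁ u₂ u₃ a₁ a₂ a₃ : ℝ → ℝ)
    (hu₁d : Differentiable ℝ u₁) (hu₂d : Differentiable ℝ u₂)
    (hu₃d : Differentiable ℝ u₃)
    (ha₁d : Differentiable ℝ a₁) (ha₂d : Differentiable ℝ a₂)
    (ha₃d : Differentiable ℝ a₃)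
    (ha₁ : ∀ t, a₁ t = -(u₁ t * u₂ t) + deriv u₁ t)
    (ha₂ : ∀ t, a₂ t = deriv u₂ t)
    (ha₃ : ∀ t, a₃ t = u₃ t * u₂ t + deriv u₃ t)
    (hA₁ : ∀ t, deriv a₁ t =
      -(u₁ t) * (2 * a₁ t * a₃ t + (a₂ t) ^ 2) + u₁ t * (u₂ t) ^ 2
      + (1/2) * u₁ t * a₂ t + (1/2) * u₂ t * a₁ t)
    (hA₂ : ∀ t, deriv a₂ t =
      -(u₂ t) * (2 * a₁ t * a₃ t + (a₂ t) ^ 2) + (u₂ t) ^ 3 - u₂ t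
      + (1/2) * u₃ t * a₁ t - (1/2) * u₁ t * a₃ t)
    (hA₃ : ∀ t, deriv a₃ t =
      -(u₃ t) * (2 * a₁ t * a₃ t + (a₂ t) ^ 2) + u₃ t * (u₂ t) ^ 2
      - (1/2) * u₃ t * a₂ t - (1/2) * u₂ t * a₃ t)
    (hconstr₁ : ∀ t, 2 * u₁ t * u₃ t + (u₂ t) ^ 2 = 1)
    (hconstr₂ : ∀ t, u₁ t * a₃ t + u₂ t * a₂ t + u₃ t * a₁ t = 0) :
    (∀ t, deriv (fun s => 2 * a₁ s * a₃ s + (a₂ s) ^ 2 + (u₂ s) ^ 2) t = 0) ∧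
    (∀ t, deriv (fun s => -(a₃ s * u₁ s) + a₁ s * u₃ s - u₂ s / 2) t = 0) :=
  ⟨Heisenberg.deriv_energy_eq_zero hu₂d ha₁d ha₂d ha₃d ha₂ hA₁ hA₂ hA₃ hconstr₂,
    Heisenberg.deriv_charge_eq_zero hu₁d hu₂d hu₃d ha₁d ha₃d ha₁ ha₂ ha₃ hA₁ hA₃
      hconstr₁ hconstr₂⟩

/-- Conserved quantities E and J along conformal circles of the metric
g = dx₁² - dx₂² + (dx₃ - x₁dx₂)² on the 3-dimensional Heisenberg group. -/
theorem heisenberg_conserved_quantities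
    (γ₁ γ₂ γ₃ u₁ u₂ u₃ a₁ a₂ a₃ : ℝ → ℝ)
    (hγ₁ : Differentiable ℝ γ₁) (hγ₂ : Differentiable ℝ γ₂)
    (hγ₃ : Differentiable ℝ γ₃)
    (hu₁d : Differentiable ℝ u₁) (hu₂d : Differentiable ℝ u₂)
    (hu₃d : Differentiable ℝ u₃)
    (ha₁d : Differentiable ℝ a₁) (ha₂d : Differentiable ℝ a₂)
    (ha₃d : Differentiable ℝ a₃)
    (hu₁ : ∀ t, u₁ t = (1 / Real.sqrt 2) * (deriv γ₁ t - deriv γ₂ t))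
    (hu₂ : ∀ t, u₂ t = deriv γ₃ t - γ₁ t * deriv γ₂ t)
    (hu₃ : ∀ t, u₃ t = (1 / Real.sqrt 2) * (deriv γ₁ t + deriv γ₂ t))
    (ha₁ : ∀ t, a₁ t = -(u₁ t * u₂ t) + deriv u₁ t)
    (ha₂ : ∀ t, a₂ t = deriv u₂ t)
    (ha₃ : ∀ t, a₃ t = u₃ t * u₂ t + deriv u₃ t)
    (hA₁ : ∀ t, deriv a₁ t =
      -(u₁ t) * (2 * a₁ t * a₃ t + (a₂ t) ^ 2) + u₁ t * (u₂ t) ^ 2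
      + (1/2) * u₁ t * a₂ t + (1/2) * u₂ t * a₁ t)
    (hA₂ : ∀ t, deriv a₂ t =
      -(u₂ t) * (2 * a₁ t * a₃ t + (a₂ t) ^ 2) + (u₂ t) ^ 3 - u₂ t
      + (1/2) * u₃ t * a₁ t - (1/2) * u₁ t * a₃ t)
    (hA₃ : ∀ t, deriv a₃ t =
      -(u₃ t) * (2 * a₁ t * a₃ t + (a₂ t) ^ 2) + u₃ t * (u₂ t) ^ 2
      - (1/2) * u₃ t * a₂ t - (1/2) * u₂ t * a₃ t)
    (hconstr₁ : ∀ t, 2 * u₁ t * u₃ t + (u₂ t) ^ 2 = 1)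
    (hconstr₂ : ∀ t, u₁ t * a₃ t + u₂ t * a₂ t + u₃ t * a₁ t = 0) :
    (∀ t, deriv (fun s => 2 * a₁ s * a₃ s + (a₂ s) ^ 2 + (u₂ s) ^ 2) t = 0) ∧
    (∀ t, deriv (fun s => -(a₃ s * u₁ s) + a₁ s * u₃ s - u₂ s / 2) t = 0) :=
  heisenberg_conserved_quantities_general u₁ u₂ u₃ a₁ a₂ a₃ hu₁d hu₂d hu₃d ha₁d ha₂d ha₃d ha₁ ha₂
    ha₃ hA₁ hA₂ hA₃ hconstr₁ hconstr₂
end
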